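/- Let n ≥ 1, λ > 0, α ∈ ℝⁿ with αᵢ > 0, β ∈ ℝⁿ with 0 < βᵢ < 1, and suppose φ satisfies 1 + (∑ᵢ αᵢ)/(∑ᵢ ((1+βᵢ)/(1-βᵢ)) αᵢ) = φ. Then the fixed points of the two affine maps u ↦ A₁u + B₁ and u ↦ A₂u + B₂ coincide and equal u_con with (u_con)ᵢ = αᵢ T*/(1-βᵢ), T* = 2λ/∑ⱼ((1+βⱼ)/(1-βⱼ))αⱼ, where A₁ = diag(β) - 2αβᵀ/∑ⱼαⱼ, B₁ = 2λα/∑ⱼαⱼ, A₂ = diag(β) - αβᵀ/∑ⱼαⱼ, B₂ = φλα/∑ⱼαⱼ. -/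

import Mathlib

open Matrix

/-!
A fixed point of `u ↦ (diagonal β - c • vecMulVec α β) *ᵥ u + b • α` satisfies
`(1 - βᵢ) uᵢ = αᵢ t` with the single scalar `t = b - c (β ⬝ᵥ u)`, so it is proportional to
`αᵢ / (1 - βᵢ)`; feeding this back into `t` gives the linear equation `t (1 + c M) = b`,
`M = ∑ βᵢ αᵢ / (1 - βᵢ)`, which has exactly one solution since `c, M ≥ 0`. For both maps of the
theorem this solution is `T*`, thanks to the condition on `φ`.
-/

section RankOneUpdate

variable {ι : Type*} [Fintype ι] [DecidableEq ι] (α β : ι → ℝ)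

theorem diagonal_sub_smul_vecMulVec_mulVec (c : ℝ) (u : ι → ℝ) :
    (diagonal β - c • vecMulVec α β) *ᵥ u = β * u - (c * (β ⬝ᵥ u)) • α := by
  ext i
  simp only [sub_mulVec, smul_mulVec, vecMulVec_mulVec, op_smul_eq_smul, Pi.sub_apply,
    mulVec_diagonal, Pi.mul_apply, Pi.smul_apply, smul_eq_mul]
  ring

variable {α β}

theorem eq_diagonal_sub_smul_vecMulVec_mulVec_add_smul_iff {c b t : ℝ} (u : ι → ℝ)
    (hβ : ∀ i, β i ≠ 1) (hcM : 1 + c * ∑ i, β i * α i / (1 - β i) ≠ 0)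
    (ht : t * (1 + c * ∑ i, β i * α i / (1 - β i)) = b) :
    u = (diagonal β - c • vecMulVec α β) *ᵥ u + b • α ↔ u = fun i => α i * t / (1 - β i) := by
  have hβ' : ∀ i, 1 - β i ≠ 0 := fun i => sub_ne_zero.mpr (hβ i).symm
  have dot_eq (s : ℝ) : (β ⬝ᵥ fun i => α i * s / (1 - β i)) = s * ∑ i, β i * α i / (1 - β i) := by
    rw [dotProduct, Finset.mul_sum]
    exact Finset.sum_congr rfl fun i _ => by ring
  rw [diagonal_sub_smul_vecMulVec_mulVec]
  constructor
  · intro h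
    set s := b - c * (β ⬝ᵥ u) with hs_def
    have hu : u = fun i => α i * s / (1 - β i) := by
      ext i
      have hi := congrFun h i
      simp only [Pi.add_apply, Pi.sub_apply, Pi.mul_apply, Pi.smul_apply, smul_eq_mul] at hi
      rw [eq_div_iff (hβ' i)]
      linear_combination hi
    have hs : s * (1 + c * ∑ i, β i * α i / (1 - β i)) = b := by
      rw [hu, dot_eq] at hs_def
      linear_combination hs_def
    rwa [← mul_right_cancel₀ hcM (hs.trans ht.symm)]
  · rintro rfl
    ext i
    simp only [Pi.add_apply, Pi.sub_apply, Pi.mul_apply, Pi.smul_apply, smul_eq_mul, dot_eq]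
    field_simp [hβ' i]
    linear_combination α i * (1 - β i) * ht

end RankOneUpdate

theorem stmt6_general (n : ℕ) (hn : 0 < n) (lam φ : ℝ)
    (α β : Fin n → ℝ) (hα : ∀ i, 0 < α i) (hβ : ∀ i, 0 < β i ∧ β i < 1)
    (hφ : 1 + (∑ i, α i) / (∑ i, ((1 + β i) / (1 - β i)) * α i) = φ)
    (A₁ A₂ : Matrix (Fin n) (Fin n) ℝ)
    (hA₁ : A₁ = Matrix.diagonal β - (2 / ∑ j, α j) • Matrix.vecMulVec α β)
    (hA₂ : A₂ = Matrix.diagonal β - (∑ j, α j)⁻¹ • Matrix.vecMulVec α β)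
    (B₁ B₂ : Fin n → ℝ)
    (hB₁ : ∀ i, B₁ i = 2 * lam * α i / ∑ j, α j)
    (hB₂ : ∀ i, B₂ i = φ * lam * α i / ∑ j, α j)
    (Tstar : ℝ) (hT : Tstar = 2 * lam / ∑ j, ((1 + β j) / (1 - β j)) * α j)
    (ucon : Fin n → ℝ) (hu : ∀ i, ucon i = α i * Tstar / (1 - β i)) :
    ucon = A₁.mulVec ucon + B₁ ∧ ucon = A₂.mulVec ucon + B₂ ∧
    (∀ v : Fin n → ℝ, v = A₁.mulVec v + B₁ → v = ucon) ∧
    (∀ v : Fin n → ℝ, v = A₂.mulVec v + B₂ → v = ucon) := by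
  obtain rfl : ucon = fun i => α i * Tstar / (1 - β i) := funext hu
  set S := ∑ j, α j
  set M := ∑ i, β i * α i / (1 - β i)
  have hS : 0 < S := Finset.sum_pos (fun i _ => hα i) ⟨⟨0, hn⟩, Finset.mem_univ _⟩
  have hM : 0 ≤ M := Finset.sum_nonneg fun i _ =>
    div_nonneg (mul_nonneg (hβ i).1.le (hα i).le) (sub_nonneg.2 (hβ i).2.le)
  have hcM {c : ℝ} (hc : 0 ≤ c) : 1 + c * M ≠ 0 := by nlinarith [mul_nonneg hc hM]
  have hD : ∑ j, ((1 + β j) / (1 - β j)) * α j = S + 2 * M := by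
    rw [Finset.mul_sum, ← Finset.sum_add_distrib]
    refine Finset.sum_congr rfl fun i _ => ?_
    field_simp [sub_ne_zero.2 (hβ i).2.ne']
    ring
  rw [hD] at hT hφ
  have hβ₁ : ∀ i, β i ≠ 1 := fun i => (hβ i).2.ne
  have fix₁ (v : Fin n → ℝ) := eq_diagonal_sub_smul_vecMulVec_mulVec_add_smul_iff (c := 2 / S)
    (b := 2 * lam / S) (t := Tstar) v hβ₁ (hcM (by positivity)) (by rw [hT]; field_simp; ring)
  have fix₂ (v : Fin n → ℝ) := eq_diagonal_sub_smul_vecMulVec_mulVec_add_smul_iff (c := S⁻¹)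
    (b := φ * lam / S) (t := Tstar) v hβ₁ (hcM (by positivity))
    (by rw [hT, ← hφ]; field_simp; ring)
  obtain rfl : B₁ = (2 * lam / S) • α := funext fun i => by
    rw [hB₁, Pi.smul_apply, smul_eq_mul]; ring
  obtain rfl : B₂ = (φ * lam / S) • α := funext fun i => by
    rw [hB₂, Pi.smul_apply, smul_eq_mul]; ring
  subst hA₁ hA₂
  exact ⟨(fix₁ _).2 rfl, (fix₂ _).2 rfl, fun v => (fix₁ v).1, fun v => (fix₂ v).1⟩

theorem stmt6 (n : ℕ) (hn : 0 < n) (lam φ : ℝ) (hlam : 0 < lam)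
    (α β : Fin n → ℝ) (hα : ∀ i, 0 < α i) (hβ : ∀ i, 0 < β i ∧ β i < 1)
    (hφ : 1 + (∑ i, α i) / (∑ i, ((1 + β i) / (1 - β i)) * α i) = φ)
    (A₁ A₂ : Matrix (Fin n) (Fin n) ℝ)
    (hA₁ : A₁ = Matrix.diagonal β - (2 / ∑ j, α j) • Matrix.vecMulVec α β)
    (hA₂ : A₂ = Matrix.diagonal β - (∑ j, α j)⁻¹ • Matrix.vecMulVec α β)
    (B₁ B₂ : Fin n → ℝ)
    (hB₁ : ∀ i, B₁ i = 2 * lam * α i / ∑ j, α j)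
    (hB₂ : ∀ i, B₂ i = φ * lam * α i / ∑ j, α j)
    (Tstar : ℝ) (hT : Tstar = 2 * lam / ∑ j, ((1 + β j) / (1 - β j)) * α j)
    (ucon : Fin n → ℝ) (hu : ∀ i, ucon i = α i * Tstar / (1 - β i)) :
    ucon = A₁.mulVec ucon + B₁ ∧ ucon = A₂.mulVec ucon + B₂ ∧
    (∀ v : Fin n → ℝ, v = A₁.mulVec v + B₁ → v = ucon) ∧
    (∀ v : Fin n → ℝ, v = A₂.mulVec v + B₂ → v = ucon) :=
  stmt6_general n hn lam φ α β hα hβ hφ A₁ A₂ hA₁ hA₂ B₁ B₂ hB₁ hB₂ Tstar hT ucon hu
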